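/- arXiv:2002.12279 — 8 statements merged into one kernel-verified Lean document; each statement's English description precedes it below -/
import Mathlib

section
/- Let E be a finite-dimensional complex inner product space and let A : E → E be an antiunitary involution, i.e. A is conjugate-linear (A(x+y) = A x + A y and A(c • x) = (conj c) • A x for all c ∈ ℂ), satisfies ⟪A x, A y⟫ = conj ⟪x, y⟫ for all x, y ∈ E, and A ∘ A = id. Then there exists an orthonormal basis {α_i} of E such that A α_i = α_i for every i. -/
/-!
The vectors fixed by `A` form a real subspace `F` on which `⟪·,·⟫_ℂ` is real-valued, because
`conj ⟪x, y⟫ = ⟪A x, A y⟫ = ⟪x, y⟫` there. Hence any real orthonormal basis of `F` is orthonormal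
over `ℂ`, and it spans `E` over `ℂ` since every `x` is `u + i v` with `u = (x + A x) / 2` and
`v = -i (x - A x) / 2` both fixed.
-/

open scoped InnerProductSpace ComplexConjugate

section FixedVectors

variable {E : Type*} [NormedAddCommGroup E] [InnerProductSpace ℂ E]

def fixedSubmodule (A : E →ₗ⋆[ℂ] E) : Submodule ℝ E where
  carrier := {x | A x = x}
  add_mem' {x y} hx hy := by simp_all
  zero_mem' := map_zero A
  smul_mem' c x hx := by
    simp only [Set.mem_ofPred_eq] at hx ⊢
    rw [← Complex.coe_smul, A.map_smulₛₗ, hx, Complex.conj_ofReal]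

namespace fixedSubmodule

variable {A : E →ₗ⋆[ℂ] E}

@[simp]
theorem mem_iff {x : E} : x ∈ fixedSubmodule A ↔ A x = x := Iff.rfl

theorem ofReal_re_inner (hA : ∀ x y, ⟪A x, A y⟫_ℂ = conj ⟪x, y⟫_ℂ) {x y : E}
    (hx : x ∈ fixedSubmodule A) (hy : y ∈ fixedSubmodule A) :
    ((⟪x, y⟫_ℂ).re : ℂ) = ⟪x, y⟫_ℂ := by
  rw [← Complex.conj_eq_iff_re, ← hA, mem_iff.mp hx, mem_iff.mp hy]

theorem exists_eq_add_I_smul (hA : ∀ x, A (A x) = x) (x : E) :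
    ∃ u ∈ fixedSubmodule A, ∃ v ∈ fixedSubmodule A, x = u + Complex.I • v := by
  refine ⟨(2⁻¹ : ℂ) • (x + A x), ?_, (-Complex.I * 2⁻¹) • (x - A x), ?_, ?_⟩
  · simp [hA, add_comm, map_ofNat]
  · simp [hA, smul_sub, map_ofNat, add_comm]
  · rw [smul_smul, ← mul_assoc, mul_neg, Complex.I_mul_I, neg_neg, one_mul, smul_sub, smul_add]
    module

theorem span_complex_eq_top (hA : ∀ x, A (A x) = x) {ι : Type*} {v : ι → fixedSubmodule A}
    (hv : Submodule.span ℝ (Set.range v) = ⊤) :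
    Submodule.span ℂ (Set.range fun i ↦ (v i : E)) = ⊤ := by
  have hsub : (fixedSubmodule A : Set E) ⊆ Submodule.span ℂ (Set.range fun i ↦ (v i : E)) := by
    intro x hx
    have : x ∈ (Submodule.span ℝ (Set.range v)).map (fixedSubmodule A).subtype := by
      rw [hv]; exact ⟨⟨x, hx⟩, trivial, rfl⟩
    rw [Submodule.map_span, ← Set.range_comp] at this
    exact Submodule.span_le_restrictScalars ℝ ℂ _ this
  refine Submodule.eq_top_iff'.mpr fun x ↦ ?_
  obtain ⟨u, hu, w, hw, rfl⟩ := exists_eq_add_I_smul hA x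
  exact add_mem (hsub hu) (Submodule.smul_mem _ _ (hsub hw))

end fixedSubmodule

section RealInner

attribute [local instance] InnerProductSpace.rclikeToReal

theorem fixedSubmodule.orthonormal_coe {A : E →ₗ⋆[ℂ] E}
    (hA : ∀ x y, ⟪A x, A y⟫_ℂ = conj ⟪x, y⟫_ℂ) {ι : Type*} {v : ι → fixedSubmodule A} (hv : Orthonormal ℝ v) : Orthonormal ℂ fun i ↦ (v i : E) := by
  classical
  rw [orthonormal_iff_ite] at hv ⊢
  intro i j
  rw [← ofReal_re_inner hA (v i).2 (v j).2]
  change ((⟪(v i : E), (v j : E)⟫_ℝ : ℝ) : ℂ) = _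
  rw [← Submodule.coe_inner, hv i j]
  split_ifs <;> simp

theorem exists_orthonormalBasis_forall_apply_eq_self [FiniteDimensional ℂ E] (A : E →ₗ⋆[ℂ] E)
    (hinner : ∀ x y, ⟪A x, A y⟫_ℂ = conj ⟪x, y⟫_ℂ) (hinv : ∀ x, A (A x) = x) :
    ∃ b : OrthonormalBasis (Fin (Module.finrank ℂ E)) ℂ E, ∀ i, A (b i) = b i := by
  let b := stdOrthonormalBasis ℝ (fixedSubmodule A)
  let B := OrthonormalBasis.mk (fixedSubmodule.orthonormal_coe hinner b.orthonormal)
    (fixedSubmodule.span_complex_eq_top hinv b.toBasis.span_eq).ge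
  refine ⟨B.reindex (finCongr (by simpa using (Module.finrank_eq_card_basis B.toBasis).symm)),
    fun i ↦ ?_⟩
  have hB : ⇑B = fun j ↦ (b j : E) := OrthonormalBasis.coe_mk _ _
  rw [OrthonormalBasis.coe_reindex, hB]
  exact (b _).2

end RealInner

end FixedVectors

/-- Wigner's normal form for antiunitary involutions (Lemma 1 of the paper):
an antiunitary involution `A` on a finite-dimensional complex inner product space
admits an orthonormal basis of fixed vectors. -/
theorem stmt_0 {E : Type*} [NormedAddCommGroup E] [InnerProductSpace ℂ E]
    [FiniteDimensional ℂ E]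
    (A : E → E)
    (hadd : ∀ x y : E, A (x + y) = A x + A y)
    (hsmul : ∀ (c : ℂ) (x : E), A (c • x) = (starRingEnd ℂ) c • A x)
    (hinner : ∀ x y : E, ⟪A x, A y⟫_ℂ = (starRingEnd ℂ) ⟪x, y⟫_ℂ)
    (hinv : ∀ x : E, A (A x) = x) :
    ∃ b : OrthonormalBasis (Fin (Module.finrank ℂ E)) ℂ E,
      ∀ i, A (b i) = b i :=
  exists_orthonormalBasis_forall_apply_eq_self
    { toFun := A, map_add' := hadd, map_smul' := hsmul } hinner hinv
end

section
/- Let P be an n×n complex unitary matrix with P · conj(P) = 1, let N be an n×n complex matrix with P · conj(N) · conj(P) = N, and let X, Y ∈ ℂ^n satisfy P · conj(X) = X and P · conj(Y) = Y. Then the scalar Xᴴ N Y (the standard Hermitian inner product of X with N·Y) is a real number, i.e. conj(Xᴴ N Y) = Xᴴ N Y. -/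
/-!
Conjugation turns `Xᴴ N Y` into `Xᵀ N̄ Ȳ`. PT-invariance gives `Ȳ = P̄ Y` and `X̄ = P̄ X`,
PT-symmetry gives `N̄ P̄ = P̄ N`, and since `P̄` and `Pᴴ` are both inverses of `P`, the matrix `P`
is symmetric. Hence `Xᵀ N̄ Ȳ = Xᵀ P̄ N Y = (P̄ X)ᵀ N Y = Xᴴ N Y`.
-/

open Matrix

namespace Matrix

variable {m n R : Type*} [Fintype n] [CommSemiring R] [StarRing R]

lemma star_mulVec_eq_map_star_mulVec (M : Matrix m n R) (v : n → R) :
    star (M *ᵥ v) = M.map star *ᵥ star v := by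
  rw [star_mulVec, ← vecMul_transpose]
  rfl

lemma star_star_dotProduct_mulVec [Fintype m] (M : Matrix m n R) (v : m → R) (w : n → R) :
    star (star v ⬝ᵥ M *ᵥ w) = v ⬝ᵥ M.map star *ᵥ star w := by
  rw [← star_mulVec_eq_map_star_mulVec, dotProduct_star, dotProduct_comm]

lemma star_eq_map_star_mulVec_of_mulVec_star_eq {P : Matrix n n R} {v : n → R}
    (h : P *ᵥ star v = v) : star v = P.map star *ᵥ v := by
  conv_lhs => rw [← h]
  rw [star_mulVec_eq_map_star_mulVec, star_star]

variable [DecidableEq n]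

lemma isSymm_of_mul_conjTranspose_eq_one_of_mul_map_star_eq_one {P : Matrix n n R}
    (hU : P * Pᴴ = 1) (hPT : P * P.map star = 1) : P.IsSymm := by
  have hinv : Pᴴ = P.map star := left_inv_eq_right_inv (mul_eq_one_comm.mp hU) hPT
  have hsymm : Pᴴ.IsSymm := hinv.symm
  simpa using hsymm.conjTranspose

lemma map_star_mul_map_star_eq_map_star_mul {P N : Matrix n n R}
    (hPT : P * P.map star = 1) (hN : P * N.map star * P.map star = N) :
    N.map star * P.map star = P.map star * N := by
  conv_rhs => rw [← hN]
  rw [← Matrix.mul_assoc, ← Matrix.mul_assoc, mul_eq_one_comm.mp hPT, Matrix.one_mul]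

end Matrix

/-- Key computation in the proof of Theorem 1(a) of the paper: matrix elements of a
PT-symmetric matrix `N` between PT-fixed vectors are real. -/
theorem stmt_5 {n : ℕ} (P N : Matrix (Fin n) (Fin n) ℂ)
    (hU : P * Pᴴ = 1)
    (hPT : P * P.map (starRingEnd ℂ) = 1)
    (hN : P * N.map (starRingEnd ℂ) * P.map (starRingEnd ℂ) = N)
    (X Y : Fin n → ℂ)
    (hX : P.mulVec (star X) = X) (hY : P.mulVec (star Y) = Y) :
    (starRingEnd ℂ) (star X ⬝ᵥ N.mulVec Y) = star X ⬝ᵥ N.mulVec Y := by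
  change P * P.map star = 1 at hPT
  change P * N.map star * P.map star = N at hN
  have hP : (P.map star)ᵀ = P.map star := by
    rw [← transpose_map, isSymm_of_mul_conjTranspose_eq_one_of_mul_map_star_eq_one hU hPT]
  calc star (star X ⬝ᵥ N *ᵥ Y)
      = X ⬝ᵥ N.map star *ᵥ star Y := star_star_dotProduct_mulVec N X Y
    _ = X ⬝ᵥ (N.map star * P.map star) *ᵥ Y := by
      rw [star_eq_map_star_mulVec_of_mulVec_star_eq hY, mulVec_mulVec]
    _ = X ⬝ᵥ P.map star *ᵥ N *ᵥ Y := by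
      rw [map_star_mul_map_star_eq_map_star_mul hPT hN, mulVec_mulVec]
    _ = (P.map star *ᵥ X) ⬝ᵥ N *ᵥ Y := by
      rw [dotProduct_mulVec, ← vecMul_transpose (P.map star) X, hP]
    _ = star X ⬝ᵥ N *ᵥ Y := by rw [← star_eq_map_star_mulVec_of_mulVec_star_eq hX]
end

section
/- Let N and P be n×n complex matrices with P invertible and N · P = P · conj(N). If every eigenvector of N is also an eigenvector of the PT operator (i.e. for every nonzero ψ with N·ψ = ω·ψ for some ω ∈ ℂ there exists λ ∈ ℂ with P·conj(ψ) = λ·ψ), then every eigenvalue of N is real. -/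
/-! Since `N P = P N̄`, the PT image `P ψ̄` of an `ω`-eigenvector `ψ` is a `conj ω`-eigenvector.
Unbroken PT symmetry makes it a multiple of `ψ`, hence also an `ω`-eigenvector, and it is
nonzero because `P` is invertible; a nonzero vector has only one eigenvalue, so `conj ω = ω`. -/

open Matrix

namespace Matrix

variable {ι R : Type*} [Fintype ι]

theorem map_starRingEnd_mulVec_star [CommSemiring R] [StarRing R] (M : Matrix ι ι R)
    (v : ι → R) : M.map (starRingEnd R) *ᵥ star v = star (M *ᵥ v) := by
  ext i
  simp [mulVec, dotProduct, starRingEnd_apply]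

theorem mulVec_mulVec_star_of_mul_eq_mul_map [CommSemiring R] [StarRing R]
    {N P : Matrix ι ι R} (hPT : N * P = P * N.map (starRingEnd R)) {ω : R} {ψ : ι → R}
    (hψ : N *ᵥ ψ = ω • ψ) :
    N *ᵥ (P *ᵥ star ψ) = starRingEnd R ω • (P *ᵥ star ψ) := by
  rw [mulVec_mulVec, hPT, ← mulVec_mulVec, map_starRingEnd_mulVec_star, hψ, star_smul,
    mulVec_smul, starRingEnd_apply]

theorem eq_of_mulVec_eq_smul_of_mulVec_eq_smul [Ring R] [NoZeroDivisors R]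
    {M : Matrix ι ι R} {v : ι → R} (hv : v ≠ 0) {a b : R} (ha : M *ᵥ v = a • v)
    (hb : M *ᵥ v = b • v) : a = b :=
  smul_left_injective R hv (ha.symm.trans hb)

end Matrix

/-- Full-spectrum form of property (ii) of PT-symmetric Hamiltonians: if PT symmetry is
unbroken (every eigenvector of `N` is also an eigenvector of the PT operator
`ψ ↦ P ⬝ conj ψ`), then every eigenvalue of `N` is real. -/
theorem stmt_9 {n : ℕ} (N P : Matrix (Fin n) (Fin n) ℂ)
    (hP : IsUnit P)
    (hPT : N * P = P * N.map (starRingEnd ℂ))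
    (hunbroken : ∀ (ω : ℂ) (ψ : Fin n → ℂ), ψ ≠ 0 → N.mulVec ψ = ω • ψ →
      ∃ lam : ℂ, P.mulVec (star ψ) = lam • ψ) :
    ∀ (ω : ℂ) (ψ : Fin n → ℂ), ψ ≠ 0 → N.mulVec ψ = ω • ψ → ω.im = 0 := by
  intro ω ψ hψ hNψ
  obtain ⟨lam, hlam⟩ := hunbroken ω ψ hψ hNψ
  have hφ : P *ᵥ star ψ ≠ 0 := fun h =>
    star_ne_zero.2 hψ ((mulVec_injective_iff_isUnit.2 hP) (h.trans (mulVec_zero P).symm))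
  have hφ_conj := mulVec_mulVec_star_of_mul_eq_mul_map hPT hNψ
  have hφ_self : N *ᵥ (P *ᵥ star ψ) = ω • (P *ᵥ star ψ) := by
    rw [hlam, mulVec_smul, hNψ, smul_comm]
  exact Complex.conj_eq_iff_im.1
    (eq_of_mulVec_eq_smul_of_mulVec_eq_smul hφ hφ_conj hφ_self)
end

section
/- Let N and P be n×n complex matrices with P invertible and N · P = P · conj(N). If N has an eigenvalue ω with Im(ω) ≠ 0, then N has an eigenvalue with strictly positive imaginary part; moreover any eigenvector ψ of such a non-real eigenvalue fails to be an eigenvector of the PT operator (there is no λ ∈ ℂ with P·conj(ψ) = λ·ψ). -/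
/-!
PT symmetry intertwines `N` with its entrywise conjugate, so the PT operator `ψ ↦ P *ᵥ star ψ`
sends an eigenvector for `ω` to an eigenvector for `star ω`, nonzero because `P` is invertible.
One of `ω`, `star ω` lies in the upper half-plane; and if `ψ` were itself an eigenvector of
the PT operator, `N` would act on it by both `ω` and `star ω`, forcing `ω` to be real.
-/

open Matrix

section PTSymmetry

variable {ι R : Type*} [Fintype ι]

theorem Matrix.map_starRingEnd_mulVec_star_s10 [CommSemiring R] [StarRing R]
    (M : Matrix ι ι R) (v : ι → R) :
    M.map (starRingEnd R) *ᵥ star v = star (M *ᵥ v) :=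
  funext fun i => (RingHom.map_mulVec (starRingEnd R) M v i).symm

theorem Matrix.mulVec_mulVec_star_eq_star_smul [CommSemiring R] [StarRing R]
    {N P : Matrix ι ι R} (hPT : N * P = P * N.map (starRingEnd R)) {ω : R} {ψ : ι → R}
    (hev : N *ᵥ ψ = ω • ψ) :
    N *ᵥ (P *ᵥ star ψ) = star ω • (P *ᵥ star ψ) := by
  rw [mulVec_mulVec, hPT, ← mulVec_mulVec, map_starRingEnd_mulVec_star_s10, hev, star_smul,
    mulVec_smul]

theorem Matrix.mulVec_star_ne_zero [Semiring R] [StarRing R] [DecidableEq ι]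
    {P : Matrix ι ι R} (hP : IsUnit P) {ψ : ι → R} (hψ : ψ ≠ 0) :
    P *ᵥ star ψ ≠ 0 := by
  rw [← mulVec_zero P]
  exact (mulVec_injective_of_isUnit hP).ne (star_ne_zero.mpr hψ)

theorem Matrix.star_eq_of_mulVec_star_eq_smul [Field R] [StarRing R] [DecidableEq ι]
    {N P : Matrix ι ι R} (hP : IsUnit P) (hPT : N * P = P * N.map (starRingEnd R))
    {ω lam : R} {ψ : ι → R} (hψ : ψ ≠ 0) (hev : N *ᵥ ψ = ω • ψ)
    (hlam : P *ᵥ star ψ = lam • ψ) :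
    star ω = ω := by
  have hlam0 : lam ≠ 0 := by
    rintro rfl
    exact mulVec_star_ne_zero hP hψ (by rw [hlam, zero_smul])
  have hsmul : (lam * star ω) • ψ = (lam * ω) • ψ := by
    rw [mul_comm, ← smul_smul, ← hlam, ← mulVec_mulVec_star_eq_star_smul hPT hev, hlam,
      mulVec_smul, hev, smul_smul]
  exact mul_left_cancel₀ hlam0 (smul_left_injective R hψ hsmul)

end PTSymmetry

/-- Property (iii) of PT-symmetric Hamiltonians: if a PT-symmetric `N` has an eigenvalue
with nonzero imaginary part, then it has an eigenvalue with strictly positive imaginary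
part (an unstable mode), and every eigenvector of a non-real eigenvalue fails to be an
eigenvector of the PT operator `ψ ↦ P ⬝ conj ψ` (spontaneously broken PT symmetry). -/
theorem stmt_10 {n : ℕ} (N P : Matrix (Fin n) (Fin n) ℂ)
    (hP : IsUnit P)
    (hPT : N * P = P * N.map (starRingEnd ℂ)) :
    ∀ (ω : ℂ) (ψ : Fin n → ℂ), ψ ≠ 0 → N.mulVec ψ = ω • ψ → ω.im ≠ 0 →
      (∃ (ω' : ℂ) (ψ' : Fin n → ℂ), ψ' ≠ 0 ∧ N.mulVec ψ' = ω' • ψ' ∧ 0 < ω'.im) ∧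
      ¬∃ lam : ℂ, P.mulVec (star ψ) = lam • ψ := by
  intro ω ψ hψ hev him
  refine ⟨?_, fun ⟨lam, hlam⟩ => him ?_⟩
  · rcases him.lt_or_gt with hneg | hpos
    · exact ⟨star ω, P *ᵥ star ψ, mulVec_star_ne_zero hP hψ,
        mulVec_mulVec_star_eq_star_smul hPT hev, by simpa using hneg⟩
    · exact ⟨ω, ψ, hψ, hev, hpos⟩
  · exact Complex.conj_eq_iff_im.mp (star_eq_of_mulVec_star_eq_smul hP hPT hψ hev hlam)
end

section
/- Fix real numbers k, a, b (standing for the wavenumber k, the equilibrium velocity v₀(z), and its derivative v₀'(z) at a point z) and a real number M ≠ 0. Define the 3×3 complex matrices N₀ = [[k a, −i b, k], [0, k a, 0], [k/M², 0, k a]] and N₁ = [[0,0,0], [0,0,−i], [0, −i/M², 0]], and P = diag(1, −1, 1). Then P² = 1 and P · conj(N₀) · P = N₀ and P · conj(N₁) · P = N₁; i.e. both N₀ and N₁ are PT-symmetric with respect to the PT operator ψ ↦ P · conj(ψ). -/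
open Matrix

/-! Conjugating by a diagonal `P = diag(s)` multiplies the `(i, j)` entry by `s i * s j`, so with
signs `s = (1, -1, 1)` the identity `P * conj N * P = N` asks the entries coupling the second
component to the others to be purely imaginary and all remaining entries to be real. -/

theorem Matrix.diagonal_mul_mul_diagonal_apply {n α : Type*} [Fintype n] [DecidableEq n]
    [NonUnitalNonAssocSemiring α] (d e : n → α) (A : Matrix n n α) (i j : n) :
    (diagonal d * A * diagonal e) i j = d i * A i j * e j := by
  rw [mul_diagonal, diagonal_mul]

theorem Matrix.diagonal_mul_self_eq_one {n α : Type*} [Fintype n] [DecidableEq n]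
    [NonAssocSemiring α] {d : n → α} (hd : ∀ i, d i * d i = 1) :
    diagonal d * diagonal d = 1 := by
  rw [diagonal_mul_diagonal, ← diagonal_one]
  exact congrArg diagonal (funext hd)

theorem parity_eq_diagonal :
    !![1, 0, 0; 0, -1, 0; 0, 0, 1] = diagonal ![(1 : ℂ), -1, 1] := by
  ext i j
  fin_cases i <;> fin_cases j <;> rfl

theorem stmt_11_general (k a b M : ℝ)
    (N₀ N₁ P : Matrix (Fin 3) (Fin 3) ℂ)
    (hN₀ : N₀ = !![(k * a : ℂ), -Complex.I * b, (k : ℂ);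
                   0, (k * a : ℂ), 0;
                   (k / M ^ 2 : ℂ), 0, (k * a : ℂ)])
    (hN₁ : N₁ = !![0, 0, 0;
                   0, 0, -Complex.I;
                   0, -Complex.I / (M ^ 2 : ℂ), 0])
    (hP : P = !![1, 0, 0; 0, -1, 0; 0, 0, 1]) :
    P * P = 1 ∧
    P * N₀.map (starRingEnd ℂ) * P = N₀ ∧
    P * N₁.map (starRingEnd ℂ) * P = N₁ := by
  subst hN₀ hN₁ hP
  rw [parity_eq_diagonal]
  refine ⟨diagonal_mul_self_eq_one fun i => ?_, ?_, ?_⟩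
  · fin_cases i <;> norm_num
  all_goals
    ext i j
    rw [diagonal_mul_mul_diagonal_apply]
    fin_cases i <;> fin_cases j <;> simp [map_div₀, neg_div]

/-- PT symmetry of the Kelvin–Helmholtz Hamiltonian (Eqs. (19)–(21) of the paper):
the matrices `N₀`, `N₁` of the linearized shear-layer Hamiltonian are PT-symmetric with
respect to the parity operator `P = diag(1, −1, 1)`. -/
theorem stmt_11 (k a b M : ℝ) (hM : M ≠ 0)
    (N₀ N₁ P : Matrix (Fin 3) (Fin 3) ℂ)
    (hN₀ : N₀ = !![(k * a : ℂ), -Complex.I * b, (k : ℂ);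
                   0, (k * a : ℂ), 0;
                   (k / M ^ 2 : ℂ), 0, (k * a : ℂ)])
    (hN₁ : N₁ = !![0, 0, 0;
                   0, 0, -Complex.I;
                   0, -Complex.I / (M ^ 2 : ℂ), 0])
    (hP : P = !![1, 0, 0; 0, -1, 0; 0, 0, 1]) :
    P * P = 1 ∧
    P * N₀.map (starRingEnd ℂ) * P = N₀ ∧
    P * N₁.map (starRingEnd ℂ) * P = N₁ :=
  stmt_11_general k a b M N₀ N₁ P hN₀ hN₁ hP
end

section
/- Let ψ = (v, w, p) ∈ ℂ³ and λ ∈ ℂ satisfy (conj(v), −conj(w), conj(p)) = λ · (v, w, p), i.e. ψ is an eigenvector of the PT operator ψ ↦ P · conj(ψ) with P = diag(1, −1, 1). If p ≠ 0, then the ratio f = v/p is real (conj(f) = f) and the ratio g = w/p is purely imaginary (conj(g) = −g). -/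
/-- Phase locking under unbroken PT symmetry: if `ψ = (v, w, p)` is an eigenvector of the
PT operator `ψ ↦ P ⬝ conj ψ` with `P = diag(1, −1, 1)`, and `p ≠ 0`, then `f = v/p` is
real and `g = w/p` is purely imaginary, i.e. `v₁ₓ` is in phase with `p₁` while `v₁_z`
has a `π/2` relative phase. -/
theorem stmt_13 (v w p lam : ℂ) (hp : p ≠ 0)
    (hv : (starRingEnd ℂ) v = lam * v)
    (hw : -(starRingEnd ℂ) w = lam * w)
    (hpp : (starRingEnd ℂ) p = lam * p) :
    (starRingEnd ℂ) (v / p) = v / p ∧ (starRingEnd ℂ) (w / p) = -(w / p) := by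
  have hlam : lam ≠ 0 := by
    intro h
    apply hp
    have := hpp
    rw [h, zero_mul] at this
    simpa using congrArg (starRingEnd ℂ) this
  constructor
  · rw [map_div₀, hv, hpp, mul_div_mul_left _ _ hlam]
  · rw [map_div₀, hpp]
    have hw' : (starRingEnd ℂ) w = -(lam * w) := by linear_combination -hw
    rw [hw', neg_div, mul_div_mul_left _ _ hlam]
end

section
/- Let k ∈ ℝ with k ≠ 0, M ∈ ℝ with M ≠ 0, ω ∈ ℂ, and set c = ω/k. Let v₀ : ℝ → ℝ be differentiable, and let u, w, p : ℝ → ℂ be functions with w and p differentiable, such that for all z: (1) i·ω·u(z) = i·k·v₀(z)·u(z) + v₀'(z)·w(z) + i·k·p(z); (2) i·ω·w(z) = i·k·v₀(z)·w(z) + p'(z); (3) i·ω·p(z) = (i·k/M²)·u(z) + (1/M²)·w'(z) + i·k·v₀(z)·p(z). Assume 1 − M²·(v₀(z) − c)² ≠ 0 for all z and v₀(z) − c ≠ 0 for all z. Then the function z ↦ ((v₀(z) − c)·w'(z) − v₀'(z)·w(z)) / (1 − M²·(v₀(z) − c)²) is differentiable and its derivative equals k²·(v₀(z) − c)·w(z)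 for all z; i.e. w = v₁_z satisfies the compressible Rayleigh equation (((v₀ − c)·v₁_z' − v₀'·v₁_z)/(1 − M²(v₀ − c)²))' − k²(v₀ − c)·v₁_z = 0. -/
/-!
Eliminating `u` between (1) and (3) shows that the Rayleigh flux
`((v₀ - c) w' - v₀' w) / (1 - M² (v₀ - c)²)` is, pointwise, just `i k p`. Equation (2) expresses
`p'` through `w`, which gives the derivative of the flux.
-/

open Complex

lemma rayleighFlux_eq_I_mul_pressure {k M ω u w w' p v v' : ℂ} (hk : k ≠ 0) (hM : M ≠ 0)
    (h1 : I * ω * u = I * k * v * u + v' * w + I * k * p)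
    (h3 : I * ω * p = I * k / M ^ 2 * u + 1 / M ^ 2 * w' + I * k * v * p)
    (hden : 1 - M ^ 2 * (v - ω / k) ^ 2 ≠ 0) :
    ((v - ω / k) * w' - v' * w) / (1 - M ^ 2 * (v - ω / k) ^ 2) = I * k * p := by
  rw [div_eq_iff hden]
  field_simp at h3 ⊢
  linear_combination (ω - k * v) * h3 + k * h1

lemma I_mul_pressure_deriv_eq {k ω w v p' : ℂ} (hk : k ≠ 0)
    (h2 : I * ω * w = I * k * v * w + p') :
    I * k * p' = k ^ 2 * (v - ω / k) * w := by
  rw [show k ^ 2 * (v - ω / k) = k * (k * v - ω) by field_simp]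
  linear_combination (-I * k) * h2 + k * (ω - k * v) * w * I_sq

theorem stmt_14_general (k M : ℝ) (hk : k ≠ 0) (hM : M ≠ 0) (ω : ℂ)
    (v₀ : ℝ → ℝ)
    (u w p : ℝ → ℂ) (hp : Differentiable ℝ p)
    (h1 : ∀ z, Complex.I * ω * u z =
      Complex.I * k * (v₀ z) * u z + ((deriv v₀ z : ℝ) : ℂ) * w z + Complex.I * k * p z)
    (h2 : ∀ z, Complex.I * ω * w z =
      Complex.I * k * (v₀ z) * w z + deriv p z)
    (h3 : ∀ z, Complex.I * ω * p z =
      Complex.I * k / (M ^ 2 : ℂ) * u z + (1 / (M ^ 2 : ℂ)) * deriv w z +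
        Complex.I * k * (v₀ z) * p z)
    (hden : ∀ z, (1 : ℂ) - (M ^ 2 : ℂ) * ((v₀ z : ℂ) - ω / k) ^ 2 ≠ 0) :
    Differentiable ℝ (fun z =>
      (((v₀ z : ℂ) - ω / k) * deriv w z - ((deriv v₀ z : ℝ) : ℂ) * w z) /
        (1 - (M ^ 2 : ℂ) * ((v₀ z : ℂ) - ω / k) ^ 2)) ∧
    ∀ z, deriv (fun z =>
      (((v₀ z : ℂ) - ω / k) * deriv w z - ((deriv v₀ z : ℝ) : ℂ) * w z) /
        (1 - (M ^ 2 : ℂ) * ((v₀ z : ℂ) - ω / k) ^ 2)) z =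
      (k ^ 2 : ℂ) * ((v₀ z : ℂ) - ω / k) * w z := by
  have hkC : (k : ℂ) ≠ 0 := by exact_mod_cast hk
  have hMC : (M : ℂ) ≠ 0 := by exact_mod_cast hM
  have hflux : (fun z => (((v₀ z : ℂ) - ω / k) * deriv w z - ((deriv v₀ z : ℝ) : ℂ) * w z) /
      (1 - (M ^ 2 : ℂ) * ((v₀ z : ℂ) - ω / k) ^ 2)) = fun z => I * k * p z :=
    funext fun z => rayleighFlux_eq_I_mul_pressure hkC hMC (h1 z) (h3 z) (hden z)
  rw [hflux]
  refine ⟨(differentiable_const _).mul hp, fun z => ?_⟩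
  rw [deriv_const_mul _ (hp z)]
  exact I_mul_pressure_deriv_eq hkC (h2 z)

/-- Reduction of the linearized shear-layer equations (Eq. (5) of the paper) to the
compressible Rayleigh equation (Eq. (23) of the paper) for `w = v₁_z`. -/
theorem stmt_14 (k M : ℝ) (hk : k ≠ 0) (hM : M ≠ 0) (ω : ℂ)
    (v₀ : ℝ → ℝ) (hv₀ : Differentiable ℝ v₀)
    (u w p : ℝ → ℂ) (hw : Differentiable ℝ w) (hp : Differentiable ℝ p)
    (h1 : ∀ z, Complex.I * ω * u z =
      Complex.I * k * (v₀ z) * u z + ((deriv v₀ z : ℝ) : ℂ) * w z + Complex.I * k * p z)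
    (h2 : ∀ z, Complex.I * ω * w z =
      Complex.I * k * (v₀ z) * w z + deriv p z)
    (h3 : ∀ z, Complex.I * ω * p z =
      Complex.I * k / (M ^ 2 : ℂ) * u z + (1 / (M ^ 2 : ℂ)) * deriv w z +
        Complex.I * k * (v₀ z) * p z)
    (hden : ∀ z, (1 : ℂ) - (M ^ 2 : ℂ) * ((v₀ z : ℂ) - ω / k) ^ 2 ≠ 0)
    (hsing : ∀ z, (v₀ z : ℂ) - ω / k ≠ 0) :
    Differentiable ℝ (fun z =>
      (((v₀ z : ℂ) - ω / k) * deriv w z - ((deriv v₀ z : ℝ) : ℂ) * w z) /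
        (1 - (M ^ 2 : ℂ) * ((v₀ z : ℂ) - ω / k) ^ 2)) ∧
    ∀ z, deriv (fun z =>
      (((v₀ z : ℂ) - ω / k) * deriv w z - ((deriv v₀ z : ℝ) : ℂ) * w z) /
        (1 - (M ^ 2 : ℂ) * ((v₀ z : ℂ) - ω / k) ^ 2)) z =
      (k ^ 2 : ℂ) * ((v₀ z : ℂ) - ω / k) * w z :=
  stmt_14_general k M hk hM ω v₀ u w p hp h1 h2 h3 hden
end

section
/- Let k ∈ ℝ, M ∈ ℝ with M ≠ 0, ω ∈ ℂ, let v₀ : ℝ → ℝ be differentiable, and let u, w, p : ℝ → ℂ with w and p differentiable satisfy for all z: (1) i·ω·u(z) = i·k·v₀(z)·u(z) + v₀'(z)·w(z) + i·k·p(z); (2) i·ω·w(z) = i·k·v₀(z)·w(z) + p'(z); (3) i·ω·p(z) = (i·k/M²)·u(z) + (1/M²)·w'(z) + i·k·v₀(z)·p(z). Then the PT-transformed triple ũ(z) = conj(u(z)), w̃(z) = −conj(w(z)), p̃(z) = conj(p(z)) satisfies the same three equations with ω replaced by conj(ω). -/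
/-!
Conjugating an equation replaces `i` by `-i`. After multiplying by `-1`, every term carrying a
factor `i` gets its original form back. The remaining terms, `v₀' w` in (1), `p'` in (2) and
`w' / M²` in (3), change sign, which is exactly what `w ↦ -conj w` accounts for.
-/

open ComplexConjugate

/-- Where `f` is not differentiable, neither is `conj ∘ f`, and both sides are the junk value `0`. -/
theorem deriv_conj_comp (f : ℝ → ℂ) (x : ℝ) :
    deriv (fun t => conj (f t)) x = conj (deriv f x) :=
  deriv.star

theorem stmt_16_general (k M : ℝ) (ω : ℂ)
    (v₀ : ℝ → ℝ)
    (u w p : ℝ → ℂ)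
    (h1 : ∀ z, Complex.I * ω * u z =
      Complex.I * k * (v₀ z) * u z + ((deriv v₀ z : ℝ) : ℂ) * w z + Complex.I * k * p z)
    (h2 : ∀ z, Complex.I * ω * w z =
      Complex.I * k * (v₀ z) * w z + deriv p z)
    (h3 : ∀ z, Complex.I * ω * p z =
      Complex.I * k / (M ^ 2 : ℂ) * u z + (1 / (M ^ 2 : ℂ)) * deriv w z +
        Complex.I * k * (v₀ z) * p z) :
    (∀ z, Complex.I * (starRingEnd ℂ) ω * (starRingEnd ℂ) (u z) =
      Complex.I * k * (v₀ z) * (starRingEnd ℂ) (u z) +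
        ((deriv v₀ z : ℝ) : ℂ) * (-(starRingEnd ℂ) (w z)) +
        Complex.I * k * (starRingEnd ℂ) (p z)) ∧
    (∀ z, Complex.I * (starRingEnd ℂ) ω * (-(starRingEnd ℂ) (w z)) =
      Complex.I * k * (v₀ z) * (-(starRingEnd ℂ) (w z)) +
        deriv (fun t => (starRingEnd ℂ) (p t)) z) ∧
    (∀ z, Complex.I * (starRingEnd ℂ) ω * (starRingEnd ℂ) (p z) =
      Complex.I * k / (M ^ 2 : ℂ) * (starRingEnd ℂ) (u z) +
        (1 / (M ^ 2 : ℂ)) * deriv (fun t => -(starRingEnd ℂ) (w t)) z +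
        Complex.I * k * (v₀ z) * (starRingEnd ℂ) (p z)) := by
  refine ⟨fun z => ?_, fun z => ?_, fun z => ?_⟩
  · have h := congrArg conj (h1 z)
    simp only [map_add, map_mul, Complex.conj_I, Complex.conj_ofReal] at h
    linear_combination -h
  · have h := congrArg conj (h2 z)
    simp only [map_add, map_mul, Complex.conj_I, Complex.conj_ofReal] at h
    rw [deriv_conj_comp]
    linear_combination h
  · have h := congrArg conj (h3 z)
    simp only [map_add, map_mul, map_div₀, map_one, map_pow, Complex.conj_I,
      Complex.conj_ofReal] at h
    rw [deriv.fun_neg, deriv_conj_comp]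
    linear_combination -h

/-- PT symmetry of the full Kelvin–Helmholtz eigenvalue problem (Eq. (5) of the paper):
if `(u, w, p)` solves the linearized shear-layer equations with eigenfrequency `ω`, then
the PT-transformed triple `(conj u, −conj w, conj p)` solves them with eigenfrequency
`conj ω`; eigenmodes come in pairs with conjugate eigenfrequencies. -/
theorem stmt_16 (k M : ℝ) (hM : M ≠ 0) (ω : ℂ)
    (v₀ : ℝ → ℝ) (hv₀ : Differentiable ℝ v₀)
    (u w p : ℝ → ℂ) (hw : Differentiable ℝ w) (hp : Differentiable ℝ p)
    (h1 : ∀ z, Complex.I * ω * u z =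
      Complex.I * k * (v₀ z) * u z + ((deriv v₀ z : ℝ) : ℂ) * w z + Complex.I * k * p z)
    (h2 : ∀ z, Complex.I * ω * w z =
      Complex.I * k * (v₀ z) * w z + deriv p z)
    (h3 : ∀ z, Complex.I * ω * p z =
      Complex.I * k / (M ^ 2 : ℂ) * u z + (1 / (M ^ 2 : ℂ)) * deriv w z +
        Complex.I * k * (v₀ z) * p z) :
    (∀ z, Complex.I * (starRingEnd ℂ) ω * (starRingEnd ℂ) (u z) =
      Complex.I * k * (v₀ z) * (starRingEnd ℂ) (u z) +
        ((deriv v₀ z : ℝ) : ℂ) * (-(starRingEnd ℂ) (w z)) +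
        Complex.I * k * (starRingEnd ℂ) (p z)) ∧
    (∀ z, Complex.I * (starRingEnd ℂ) ω * (-(starRingEnd ℂ) (w z)) =
      Complex.I * k * (v₀ z) * (-(starRingEnd ℂ) (w z)) +
        deriv (fun t => (starRingEnd ℂ) (p t)) z) ∧
    (∀ z, Complex.I * (starRingEnd ℂ) ω * (starRingEnd ℂ) (p z) =
      Complex.I * k / (M ^ 2 : ℂ) * (starRingEnd ℂ) (u z) +
        (1 / (M ^ 2 : ℂ)) * deriv (fun t => -(starRingEnd ℂ) (w t)) z +
        Complex.I * k * (v₀ z) * (starRingEnd ℂ) (p z)) :=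
  stmt_16_general k M ω v₀ u w p h1 h2 h3
end
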